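/- arXiv:1902.03511 — 3 statements merged into one kernel-verified Lean document; each statement's English description precedes it below -/
import Mathlib

section
/- (Varshamov–Gilbert bound, as used in the lower-bound proofs.) Let m ≥ 8 be a natural number and Ω = {0,1}^m. Then there exists a subset {w⁰, w¹, …, w^M} of Ω with w⁰ = (0,…,0) and M ≥ 2^{m/8} such that for all 0 ≤ j < k ≤ M, the Hamming distance satisfies ω(w^j, w^k) ≥ m/8. -/
open Finset

private def hdistVG {m : ℕ} (x y : Fin m → Bool) : ℕ :=
  (Finset.univ.filter fun i => x i ≠ y i).card

private lemma hdistVG_self {m : ℕ} (x : Fin m → Bool) : hdistVG x x = 0 := by simp [hdistVG]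

private lemma hdistVG_comm {m : ℕ} (x y : Fin m → Bool) : hdistVG x y = hdistVG y x := by
  unfold hdistVG; congr 1; apply Finset.filter_congr; intro i _; simp [ne_comm]

private lemma hdistVG_ball_card_le {m : ℕ} (c : Fin m → Bool) (d : ℕ) :
    ((Finset.univ : Finset (Fin m → Bool)).filter fun x => hdistVG x c < d).card
      ≤ ∑ i ∈ Finset.range d, m.choose i := by
  classical
  have hinj : Set.InjOn (fun x : Fin m → Bool => Finset.univ.filter fun i => x i ≠ c i)
      ((Finset.univ : Finset (Fin m → Bool)).filter fun x => hdistVG x c < d) := by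
    intro x hx y hy hxy
    have h2 : (Finset.univ.filter fun i => x i ≠ c i)
        = (Finset.univ.filter fun i => y i ≠ c i) := hxy
    funext i
    have : (i ∈ Finset.univ.filter fun i => x i ≠ c i) ↔
        (i ∈ Finset.univ.filter fun i => y i ≠ c i) := by rw [h2]
    simp only [Finset.mem_filter, Finset.mem_univ, true_and] at this
    cases hx' : x i <;> cases hy' : y i <;> cases hc : c i <;> simp_all
  have hmaps : ∀ x ∈ (Finset.univ : Finset (Fin m → Bool)).filter fun x => hdistVG x c < d,
      (Finset.univ.filter fun i => x i ≠ c i) ∈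
        (Finset.univ : Finset (Finset (Fin m))).filter fun s => s.card < d := by
    intro x hx
    simp only [Finset.mem_filter, Finset.mem_univ, true_and] at hx ⊢
    exact hx
  have h1 := Finset.card_le_card_of_injOn _ hmaps hinj
  refine h1.trans (le_of_eq ?_)
  have heq : ((Finset.univ : Finset (Finset (Fin m))).filter fun s => s.card < d)
      = (Finset.range d).biUnion fun i => Finset.powersetCard i Finset.univ := by
    ext s
    simp [Finset.mem_powersetCard_univ, eq_comm]
  rw [heq, Finset.card_biUnion]
  · refine Finset.sum_congr rfl fun i _ => ?_
    rw [Finset.card_powersetCard, Finset.card_univ, Fintype.card_fin]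
  · intro i _ j _ hij
    simp only [Finset.disjoint_left, Finset.mem_powersetCard_univ]
    intro s hs hs'
    exact hij (hs ▸ hs')

private lemma sum_choose_mul_le_VG {m d : ℕ} (hdm : d ≤ m) :
    (∑ i ∈ Finset.range d, m.choose i) * 7 ^ (m - d + 1) ≤ 8 ^ m := by
  have h8 : (8 : ℕ) ^ m = ∑ i ∈ Finset.range (m + 1), m.choose i * 7 ^ (m - i) := by
    have h := add_pow (1 : ℕ) 7 m
    norm_num [mul_comm] at h
    exact h
  rw [h8, Finset.sum_mul]
  calc ∑ i ∈ Finset.range d, m.choose i * 7 ^ (m - d + 1)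
      ≤ ∑ i ∈ Finset.range d, m.choose i * 7 ^ (m - i) := by
        refine Finset.sum_le_sum fun i hi => ?_
        have hi' := Finset.mem_range.1 hi
        exact Nat.mul_le_mul_left _ (Nat.pow_le_pow_right (by norm_num) (by omega))
    _ ≤ ∑ i ∈ Finset.range (m + 1), m.choose i * 7 ^ (m - i) :=
        Finset.sum_le_sum_of_subset (Finset.range_subset_range.2 (by omega))

private lemma exists_maximal_code_VG (m d : ℕ) (hd : 1 ≤ d) :
    ∃ C : Finset (Fin m → Bool),
      (fun _ => false) ∈ C ∧
      (∀ x ∈ C, ∀ y ∈ C, x ≠ y → d ≤ hdistVG x y) ∧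
      (∀ x : Fin m → Bool, ∃ c ∈ C, hdistVG x c < d) := by
  classical
  set c0 : Fin m → Bool := fun _ => false with hc0
  set S : Finset (Finset (Fin m → Bool)) :=
    Finset.univ.filter (fun C => c0 ∈ C ∧ ∀ x ∈ C, ∀ y ∈ C, x ≠ y → d ≤ hdistVG x y) with hS
  have hne : S.Nonempty := ⟨{c0}, by simp [hS]⟩
  obtain ⟨C, hCS, hmax⟩ := S.exists_max_image Finset.card hne
  simp only [hS, Finset.mem_filter, Finset.mem_univ, true_and] at hCS
  refine ⟨C, hCS.1, hCS.2, ?_⟩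
  by_contra hcon
  push_neg at hcon
  obtain ⟨x, hx⟩ := hcon
  have hxC : x ∉ C := fun hmem => by
    have := hx x hmem
    rw [hdistVG_self] at this
    omega
  have hins : insert x C ∈ S := by
    simp only [hS, Finset.mem_filter, Finset.mem_univ, true_and]
    constructor
    · exact Finset.mem_insert_of_mem hCS.1
    · intro a ha b hb hab
      rcases Finset.mem_insert.1 ha with rfl | ha'
      · rcases Finset.mem_insert.1 hb with rfl | hb'
        · exact absurd rfl hab
        · exact hx b hb'
      · rcases Finset.mem_insert.1 hb with rfl | hb'
        · rw [hdistVG_comm]; exact hx a ha'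
        · exact hCS.2 a ha' b hb' hab
  have := hmax _ hins
  rw [Finset.card_insert_of_notMem hxC] at this
  omega

private lemma key_real_VG (m d : ℕ) (hm : 8 ≤ m) (hde : 7 * m + 1 ≤ 8 * (m - d + 1)) :
    ((2:ℝ) ^ ((m:ℝ)/8) + 1) * 8 ^ m ≤ 2 ^ m * 7 ^ (m - d + 1) := by
  set e := m - d + 1 with he
  set t : ℝ := (2:ℝ) ^ ((m:ℝ)/8) with ht
  have ht1 : (1:ℝ) ≤ t := Real.one_le_rpow (by norm_num) (by positivity)
  have step1 : t + 1 ≤ 2 * t := by linarith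
  have t8 : t ^ (8:ℕ) = 2 ^ m := by
    rw [ht, ← Real.rpow_natCast ((2:ℝ) ^ ((m:ℝ)/8)) 8, ← Real.rpow_mul (by norm_num)]
    norm_num
  have hnat : (2:ℕ) ^ (17 * m + 8) ≤ 7 ^ (7 * m + 1) := by
    have k1 : (6:ℕ) * 2 ^ 17 ≤ 7 ^ 7 := by norm_num
    have k2 : (256:ℕ) ≤ 7 * 6 ^ m :=
      le_trans (by norm_num) (Nat.mul_le_mul_left 7 (Nat.pow_le_pow_right (by norm_num) hm))
    calc (2:ℕ) ^ (17 * m + 8) = 256 * (2 ^ 17) ^ m := by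
          rw [pow_add, pow_mul]; norm_num [mul_comm]
      _ ≤ (7 * 6 ^ m) * (2 ^ 17) ^ m := Nat.mul_le_mul_right _ k2
      _ = 7 * (6 * 2 ^ 17) ^ m := by rw [mul_pow]; ring
      _ ≤ 7 * (7 ^ 7) ^ m := Nat.mul_le_mul_left _ (Nat.pow_le_pow_left k1 m)
      _ = 7 ^ (7 * m + 1) := by rw [← pow_mul, pow_add]; ring
  have hR : (2:ℝ) ^ (17 * m + 8) ≤ 7 ^ (8 * e) := by
    calc (2:ℝ) ^ (17 * m + 8) ≤ 7 ^ (7 * m + 1) := by exact_mod_cast hnat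
      _ ≤ 7 ^ (8 * e) := pow_le_pow_right₀ (by norm_num) hde
  have lhs : (2 * t * 8 ^ m : ℝ) ^ (8:ℕ) = 2 ^ (25 * m + 8) := by
    rw [mul_pow, mul_pow, t8, show (8:ℝ) = 2 ^ 3 by norm_num, ← pow_mul, ← pow_mul,
      ← pow_add, ← pow_add]
    congr 1
    ring
  have rhs : ((2:ℝ) ^ m * 7 ^ e) ^ (8:ℕ) = 2 ^ (8 * m) * 7 ^ (8 * e) := by
    rw [mul_pow, ← pow_mul, ← pow_mul, Nat.mul_comm m 8, Nat.mul_comm e 8]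
  have key8 : (2 * t * 8 ^ m : ℝ) ^ (8:ℕ) ≤ ((2:ℝ) ^ m * 7 ^ e) ^ (8:ℕ) := by
    rw [lhs, rhs]
    calc (2:ℝ) ^ (25 * m + 8) = 2 ^ (8 * m) * 2 ^ (17 * m + 8) := by
          rw [← pow_add]; congr 1; ring
      _ ≤ 2 ^ (8 * m) * 7 ^ (8 * e) := mul_le_mul_of_nonneg_left hR (by positivity)
  have key : (2 * t * 8 ^ m : ℝ) ≤ (2:ℝ) ^ m * 7 ^ e :=
    le_of_pow_le_pow_left₀ (by norm_num) (by positivity) key8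
  calc ((t + 1) * 8 ^ m : ℝ) ≤ 2 * t * 8 ^ m :=
        mul_le_mul_of_nonneg_right step1 (by positivity)
    _ ≤ 2 ^ m * 7 ^ e := key

/-- **Varshamov–Gilbert bound.** For `m ≥ 8` there exist
`w⁰, w¹, …, w^M ∈ {0,1}^m` with `w⁰ = (0,…,0)`, `M ≥ 2^{m/8}`, and pairwise Hamming
distance at least `m/8`. -/
theorem varshamov_gilbert (m : ℕ) (hm : 8 ≤ m) :
    ∃ (M : ℕ) (w : Fin (M + 1) → (Fin m → Bool)),
      (2 : ℝ) ^ ((m : ℝ) / 8) ≤ (M : ℝ) ∧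
      w 0 = (fun _ => false) ∧
      ∀ j k : Fin (M + 1), j ≠ k →
        (m : ℝ) / 8 ≤ ((Finset.univ.filter fun i => w j i ≠ w k i).card : ℝ) := by
  classical
  set d : ℕ := (m + 7) / 8 with hd
  have hd1 : 1 ≤ d := by omega
  have hdm : d ≤ m := by omega
  have hmd : m ≤ 8 * d := by omega
  have hde : 7 * m + 1 ≤ 8 * (m - d + 1) := by omega
  obtain ⟨C, hc0C, hCpair, hCcover⟩ := exists_maximal_code_VG m d hd1
  set V : ℕ := ∑ i ∈ Finset.range d, m.choose i with hV
  -- counting: 2^m ≤ C.card * V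
  have hcover : (Finset.univ : Finset (Fin m → Bool)) ⊆
      C.biUnion (fun c => Finset.univ.filter fun x => hdistVG x c < d) := by
    intro x _
    obtain ⟨c, hc, hlt⟩ := hCcover x
    exact Finset.mem_biUnion.2 ⟨c, hc, by simp [hlt]⟩
  have hcount : 2 ^ m ≤ C.card * V := by
    have h1 : (Finset.univ : Finset (Fin m → Bool)).card = 2 ^ m := by
      simp [Finset.card_univ]
    calc 2 ^ m = (Finset.univ : Finset (Fin m → Bool)).card := h1.symm
      _ ≤ (C.biUnion (fun c => Finset.univ.filter fun x => hdistVG x c < d)).card :=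
          Finset.card_le_card hcover
      _ ≤ ∑ c ∈ C, (Finset.univ.filter fun x => hdistVG x c < d).card :=
          Finset.card_biUnion_le
      _ ≤ ∑ _c ∈ C, V := Finset.sum_le_sum fun c _ => hdistVG_ball_card_le c d
      _ = C.card * V := by rw [Finset.sum_const, smul_eq_mul]
  -- natural-number chain
  have hVbound : V * 7 ^ (m - d + 1) ≤ 8 ^ m := sum_choose_mul_le_VG hdm
  have hnat : 2 ^ m * 7 ^ (m - d + 1) ≤ C.card * 8 ^ m := by
    calc 2 ^ m * 7 ^ (m - d + 1) ≤ (C.card * V) * 7 ^ (m - d + 1) :=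
          Nat.mul_le_mul_right _ hcount
      _ = C.card * (V * 7 ^ (m - d + 1)) := by ring
      _ ≤ C.card * 8 ^ m := Nat.mul_le_mul_left _ hVbound
  -- real bound on C.card
  have hcard : (2:ℝ) ^ ((m:ℝ)/8) + 1 ≤ (C.card : ℝ) := by
    have h1 : ((2:ℝ) ^ ((m:ℝ)/8) + 1) * 8 ^ m ≤ (C.card : ℝ) * 8 ^ m := by
      calc ((2:ℝ) ^ ((m:ℝ)/8) + 1) * 8 ^ m ≤ 2 ^ m * 7 ^ (m - d + 1) :=
            key_real_VG m d hm hde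
        _ ≤ (C.card : ℝ) * 8 ^ m := by exact_mod_cast hnat
    exact le_of_mul_le_mul_right h1 (by positivity)
  have ht1 : (1:ℝ) ≤ (2:ℝ) ^ ((m:ℝ)/8) := Real.one_le_rpow (by norm_num) (by positivity)
  have hcard2 : 2 ≤ C.card := by
    have : (2:ℝ) ≤ (C.card : ℝ) := by linarith
    exact_mod_cast this
  set c0 : Fin m → Bool := fun _ => false with hc0
  set M : ℕ := C.card - 1 with hM
  have hMcard : C.card = M + 1 := by omega
  set C' : Finset (Fin m → Bool) := C.erase c0 with hC'
  have hC'card : C'.card = M := by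
    rw [hC', Finset.card_erase_of_mem hc0C]
  set g : Fin M → (Fin m → Bool) :=
    fun i => (C'.equivFin.symm (Fin.cast hC'card.symm i)).1 with hg
  have hgmem : ∀ i, g i ∈ C' := fun i => (C'.equivFin.symm (Fin.cast hC'card.symm i)).2
  have hginj : Function.Injective g := by
    intro i i' h
    have h2 : C'.equivFin.symm (Fin.cast hC'card.symm i)
        = C'.equivFin.symm (Fin.cast hC'card.symm i') := Subtype.ext h
    have h3 := C'.equivFin.symm.injective h2
    have h4 := congrArg Fin.val h3
    simp only [Fin.coe_cast] at h4
    exact Fin.ext h4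
  refine ⟨M, Fin.cases c0 g, ?_, ?_, ?_⟩
  · have : ((M : ℝ) + 1) = (C.card : ℝ) := by exact_mod_cast hMcard.symm
    linarith
  · rfl
  · intro j k hjk
    set w : Fin (M + 1) → (Fin m → Bool) := Fin.cases c0 g with hw
    have hwmem : ∀ j, w j ∈ C := by
      intro j
      rcases Fin.eq_zero_or_eq_succ j with rfl | ⟨i, rfl⟩
      · simpa [hw] using hc0C
      · simpa [hw] using Finset.mem_of_mem_erase (hgmem i)
    have hwne : w j ≠ w k := by
      rcases Fin.eq_zero_or_eq_succ j with rfl | ⟨i, rfl⟩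
      · rcases Fin.eq_zero_or_eq_succ k with rfl | ⟨i', rfl⟩
        · exact absurd rfl hjk
        · simp only [hw, Fin.cases_zero, Fin.cases_succ]
          exact fun h => (Finset.ne_of_mem_erase (hgmem i')) h.symm
      · rcases Fin.eq_zero_or_eq_succ k with rfl | ⟨i', rfl⟩
        · simp only [hw, Fin.cases_zero, Fin.cases_succ]
          exact Finset.ne_of_mem_erase (hgmem i)
        · simp only [hw, Fin.cases_succ]
          intro h
          exact hjk (congrArg Fin.succ (hginj h))
    have hdist_ge : d ≤ hdistVG (w j) (w k) := hCpair _ (hwmem j) _ (hwmem k) hwne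
    have : (m:ℝ)/8 ≤ (d:ℝ) := by
      rw [div_le_iff₀ (by norm_num)]
      exact_mod_cast by linarith [hmd]
    refine this.trans ?_
    exact_mod_cast hdist_ge
end

section
/- Let D be a positive integer, σ_d ≥ 0, p_d, q_d ∈ [1,∞] with p_d' := p_d/(p_d−1) < ∞, and set s := σ_d + D/2 − D/p_d. Let L, c, N > 0, let j₀, n ∈ ℕ, and on a probability space let (η_{j,k})_{0 ≤ j ≤ j₀, k∈ℕ} be real random variables such that for each j at most N·2^{Dj} of the variables η_{j,k} are not almost surely zero, and E[|η_{j,k}|^{p_d'}] ≤ c·n^{−p_d'/2} for all j, k. Then E[ sup_γ Σ_{j=0}^{j₀} Σ_{k∈ℕ} γ_{j,k} η_{j,k} ] ≤ L (cN)^{1/p_d'} n^{−1/2} Σ_{j=0}^{j₀} 2^{j(D/2 − σ_d)}, where the supremum is over all deterministic double sequences γ with ( Σ_{j=0}^{j₀} (2^{j s} ‖γ_{j,·}‖_{ℓ^{p_d}})^{q_d} )^{1/q_d} ≤ L. In particular, the right-hand side is O(L n^{−1/2}) when σ_d > D/2 and O(L n^{−1/2} 2^{j₀(D/2−σ_d)})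 when σ_d < D/2. -/
/-!
On level `j`, Hölder's inequality bounds `∑ₖ γⱼₖ ηⱼₖ` by `‖γⱼ‖_{p} ‖ηⱼ‖_{p'}`, and the Besov
constraint forces `‖γⱼ‖_{p} ≤ L 2^{-js}`; so the supremum is dominated pointwise by
`∑ⱼ L 2^{-js} ‖ηⱼ‖_{p'}`, uniformly in `γ`. By Jensen, `E ‖ηⱼ‖_{p'} ≤ (∑ₖ E |ηⱼₖ|^{p'})^{1/p'}`,
and at most `N 2^{Dj}` terms of that sum are nonzero, which gives
`E ‖ηⱼ‖_{p'} ≤ (cN)^{1/p'} 2^{Dj/p'} n^{-1/2}`. Since `1/p' = 1 - 1/p`, the powers of two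
combine to `2^{j(D/2 - σ)}`.
-/

open MeasureTheory ENNReal

/-- The `ℓ^p` norm (for `p ∈ [1,∞]`) of an `ℝ≥0∞`-valued sequence, with the usual
sup interpretation when `p = ∞`. -/
noncomputable def lpw (p : ℝ≥0∞) (a : ℕ → ℝ≥0∞) : ℝ≥0∞ :=
  if p = ∞ then ⨆ k, a k else (∑' k, a k ^ p.toReal) ^ (1 / p.toReal)

/-- The Hölder conjugate `p' = p/(p-1)` of `p ∈ [1,∞]`, with `1' = ∞` and `∞' = 1`. -/
noncomputable def holderConj (p : ℝ≥0∞) : ℝ≥0∞ :=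
  if p = 1 then ∞ else if p = ∞ then 1 else ENNReal.ofReal (p.toReal / (p.toReal - 1))

lemma ENNReal.ofReal_sSup_le {S : Set ℝ} {B : ℝ≥0∞} (h : ∀ x ∈ S, ENNReal.ofReal x ≤ B) :
    ENNReal.ofReal (sSup S) ≤ B := by
  obtain rfl | hB := eq_or_ne B ∞
  · exact le_top
  rw [ENNReal.ofReal_le_iff_le_toReal hB]
  exact Real.sSup_le (fun x hx => (ENNReal.ofReal_le_iff_le_toReal hB).1 (h x hx)) toReal_nonneg

section lpw

variable {p : ℝ≥0∞}

lemma lpw_one (a : ℕ → ℝ≥0∞) : lpw 1 a = ∑' k, a k := by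
  simp [lpw]

lemma lpw_top (a : ℕ → ℝ≥0∞) : lpw ∞ a = ⨆ k, a k := by
  simp [lpw]

lemma lpw_rpow_toReal (hp0 : p ≠ 0) (hp : p ≠ ∞) (a : ℕ → ℝ≥0∞) :
    lpw p a ^ p.toReal = ∑' k, a k ^ p.toReal := by
  rw [lpw, if_neg hp, ← ENNReal.rpow_mul, one_div_mul_cancel (toReal_pos hp0 hp).ne',
    ENNReal.rpow_one]

lemma le_lpw (hp : p ≠ 0) (a : ℕ → ℝ≥0∞) (k : ℕ) : a k ≤ lpw p a := by
  by_cases htop : p = ∞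
  · rw [htop, lpw_top]
    exact le_iSup a k
  · have hp0 : 0 < p.toReal := toReal_pos hp htop
    rw [← ENNReal.rpow_le_rpow_iff hp0, lpw_rpow_toReal hp htop]
    exact ENNReal.le_tsum k

lemma Measurable.lpw {Ω : Type*} [MeasurableSpace Ω] {f : ℕ → Ω → ℝ≥0∞}
    (hf : ∀ k, Measurable (f k)) : Measurable fun ω => lpw p fun k => f k ω := by
  unfold _root_.lpw
  split_ifs
  · exact .iSup hf
  · exact (Measurable.tsum fun k => (hf k).pow_const _).pow_const _

end lpw

section holderConj

variable {p : ℝ≥0∞}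

lemma holderConj_one : holderConj 1 = ∞ := by
  simp [holderConj]

lemma holderConj_top : holderConj ∞ = 1 := by
  simp [holderConj]

lemma holderConj_ne_top (hp : 1 < p) : holderConj p ≠ ∞ := by
  rw [holderConj, if_neg hp.ne']
  split_ifs <;> simp

lemma holderConjugate_toReal_holderConj (hp : 1 < p) (hp' : p ≠ ∞) :
    p.toReal.HolderConjugate (holderConj p).toReal := by
  have hconj : p.toReal.HolderConjugate (p.toReal / (p.toReal - 1)) :=
    .conjExponent (by simpa using toReal_strict_mono hp' hp)
  rwa [holderConj, if_neg hp.ne', if_neg hp', toReal_ofReal hconj.symm.nonneg]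

lemma inv_toReal_holderConj (hp : 1 ≤ p) : (holderConj p).toReal⁻¹ = 1 - p⁻¹.toReal := by
  rcases hp.eq_or_lt with rfl | hp1
  · simp [holderConj_one]
  rcases eq_or_ne p ∞ with rfl | hp'
  · simp [holderConj_top]
  rw [toReal_inv, (holderConjugate_toReal_holderConj hp1 hp').one_sub_inv]

lemma one_le_toReal_holderConj (hp : 1 ≤ p) (h : holderConj p ≠ ∞) :
    1 ≤ (holderConj p).toReal := by
  rcases hp.eq_or_lt with rfl | hp1
  · exact absurd holderConj_one h
  rcases eq_or_ne p ∞ with rfl | hp'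
  · simp [holderConj_top]
  exact (holderConjugate_toReal_holderConj hp1 hp').symm.lt.le

lemma tsum_mul_le_lpw_mul_lpw_holderConj (hp : 1 ≤ p) (f g : ℕ → ℝ≥0∞) :
    ∑' k, f k * g k ≤ lpw p f * lpw (holderConj p) g := by
  rcases hp.eq_or_lt with rfl | hp1
  · rw [holderConj_one, lpw_one, lpw_top, ← ENNReal.tsum_mul_right]
    exact ENNReal.tsum_le_tsum fun k => by gcongr; exact le_iSup g k
  rcases eq_or_ne p ∞ with rfl | hp'
  · rw [holderConj_top, lpw_one, lpw_top, ← ENNReal.tsum_mul_left]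
    exact ENNReal.tsum_le_tsum fun k => by gcongr; exact le_iSup f k
  rw [lpw, if_neg hp', lpw, if_neg (holderConj_ne_top hp1)]
  simpa [lintegral_count] using ENNReal.lintegral_mul_le_Lp_mul_Lq Measure.count
    (holderConjugate_toReal_holderConj hp1 hp') (measurable_of_countable f).aemeasurable
    (measurable_of_countable g).aemeasurable

end holderConj

lemma ofReal_sSup_sum_tsum_mul_le {p q B : ℝ≥0∞} (hp : 1 ≤ p) (hq : q ≠ 0) {w : ℕ → ℝ≥0∞}
    {m : ℕ} (hw0 : ∀ j ≤ m, w j ≠ 0) (hw : ∀ j ≤ m, w j ≠ ∞) (x : ℕ → ℕ → ℝ) :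
    ENNReal.ofReal (sSup {t : ℝ | ∃ γ : ℕ → ℕ → ℝ,
        lpw q (fun j => if j ≤ m then w j * lpw p (fun k => ‖γ j k‖ₑ) else 0) ≤ B ∧
        t = ∑ j ∈ Finset.range (m + 1), ∑' k, γ j k * x j k })
      ≤ ∑ j ∈ Finset.range (m + 1), B / w j * lpw (holderConj p) (fun k => ‖x j k‖ₑ) := by
  refine ENNReal.ofReal_sSup_le ?_
  rintro _ ⟨γ, hγ, rfl⟩
  refine (Real.ofReal_le_enorm _).trans <| (enorm_sum_le _ _).trans <|
    Finset.sum_le_sum fun j hj => ?_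
  have hjm : j ≤ m := Nat.lt_succ_iff.1 (Finset.mem_range.1 hj)
  have hγj : lpw p (fun k => ‖γ j k‖ₑ) ≤ B / w j := by
    rw [ENNReal.le_div_iff_mul_le (.inl (hw0 j hjm)) (.inl (hw j hjm)), mul_comm]
    simpa only [if_pos hjm] using (le_lpw hq _ j).trans hγ
  calc ‖∑' k, γ j k * x j k‖ₑ ≤ ∑' k, ‖γ j k‖ₑ * ‖x j k‖ₑ := by
        simpa only [enorm_mul] using enorm_tsum_le_tsum_enorm (f := fun k => γ j k * x j k)
    _ ≤ lpw p (fun k => ‖γ j k‖ₑ) * lpw (holderConj p) (fun k => ‖x j k‖ₑ) :=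
        tsum_mul_le_lpw_mul_lpw_holderConj hp _ _
    _ ≤ _ := by gcongr

section Expectation

variable {Ω : Type*} [MeasurableSpace Ω] {P : Measure Ω} [IsProbabilityMeasure P]

lemma lintegral_le_lintegral_rpow_one_div {f : Ω → ℝ≥0∞} (hf : AEMeasurable f P) {t : ℝ}
    (ht : 1 ≤ t) : ∫⁻ ω, f ω ∂P ≤ (∫⁻ ω, f ω ^ t ∂P) ^ (1 / t) := by
  simpa [eLpNorm'] using
    eLpNorm'_le_eLpNorm'_of_exponent_le zero_lt_one ht P hf.aestronglyMeasurable

lemma lintegral_lpw_le_of_finite_nonzero {t : ℝ≥0∞} (ht : 1 ≤ t.toReal) {X : ℕ → Ω → ℝ}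
    (hX : ∀ k, Measurable (X k)) (hfin : {k | ¬ X k =ᵐ[P] 0}.Finite) {B : ℝ≥0∞}
    (hB : ∀ k, ∫⁻ ω, ‖X k ω‖ₑ ^ t.toReal ∂P ≤ B) :
    ∫⁻ ω, lpw t (fun k => ‖X k ω‖ₑ) ∂P ≤ ({k | ¬ X k =ᵐ[P] 0}.ncard * B) ^ (1 / t.toReal) := by
  have ht0 : 0 < t.toReal := one_pos.trans_le ht
  obtain ⟨ht_pos, ht_lt_top⟩ := toReal_pos_iff.1 ht0
  have hmeas k : Measurable fun ω => ‖X k ω‖ₑ ^ t.toReal := (hX k).enorm.pow_const _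
  have hzero : ∀ k ∉ hfin.toFinset, ∫⁻ ω, ‖X k ω‖ₑ ^ t.toReal ∂P = 0 := by
    intro k hk
    rw [lintegral_eq_zero_iff (hmeas k)]
    filter_upwards [not_not.1 (by simpa using hk : ¬ ¬ X k =ᵐ[P] 0)] with ω hω
    simp [hω, ht0]
  refine (lintegral_le_lintegral_rpow_one_div (Measurable.lpw fun k => (hX k).enorm).aemeasurable
    ht).trans (rpow_le_rpow ?_ (by positivity))
  calc ∫⁻ ω, lpw t (fun k => ‖X k ω‖ₑ) ^ t.toReal ∂P
      = ∑' k, ∫⁻ ω, ‖X k ω‖ₑ ^ t.toReal ∂P := by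
        simp_rw [lpw_rpow_toReal ht_pos.ne' ht_lt_top.ne]
        exact lintegral_tsum fun k => (hmeas k).aemeasurable
    _ = ∑ k ∈ hfin.toFinset, ∫⁻ ω, ‖X k ω‖ₑ ^ t.toReal ∂P := tsum_eq_sum hzero
    _ ≤ ∑ _k ∈ hfin.toFinset, B := Finset.sum_le_sum fun k _ => hB k
    _ = _ := by rw [Finset.sum_const, nsmul_eq_mul, Set.ncard_eq_toFinset_card _ hfin]

end Expectation

lemma div_two_rpow_mul_level_bound_eq {L c N t σ r : ℝ} (hc : 0 ≤ c) (hN : 0 ≤ N)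
    (ht : t⁻¹ = 1 - r) (ht0 : t ≠ 0) (D j n : ℕ) :
    L / 2 ^ ((j : ℝ) * (σ + D / 2 - D * r)) * (N * 2 ^ (D * j) * (c * (n : ℝ) ^ (-t / 2))) ^ (1 / t)
      = L * (c * N) ^ (1 / t) * (n : ℝ) ^ (-(1 : ℝ) / 2) * 2 ^ ((j : ℝ) * (D / 2 - σ)) := by
  have hn : ((n : ℝ) ^ (-t / 2)) ^ (1 / t) = (n : ℝ) ^ (-(1 : ℝ) / 2) := by
    rw [← Real.rpow_mul n.cast_nonneg]
    congr 1
    field_simp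
  have h2 : ((2 : ℝ) ^ (D * j)) ^ (1 / t) / 2 ^ ((j : ℝ) * (σ + D / 2 - D * r))
      = 2 ^ ((j : ℝ) * (D / 2 - σ)) := by
    rw [← Real.rpow_natCast, ← Real.rpow_mul zero_le_two, ← Real.rpow_sub two_pos, one_div, ht]
    push_cast
    ring_nf
  rw [show N * 2 ^ (D * j) * (c * (n : ℝ) ^ (-t / 2)) = c * N * 2 ^ (D * j) * (n : ℝ) ^ (-t / 2)
    by ring, Real.mul_rpow (by positivity) (by positivity),
    Real.mul_rpow (by positivity) (by positivity), hn, ← h2]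
  ring

theorem linear_estimator_variance_bound_general
    (D : ℕ) (σd : ℝ)
    (pd qd : ℝ≥0∞) (hpd : 1 ≤ pd) (hqd : 1 ≤ qd)
    (hpd' : holderConj pd ≠ ∞)
    (L c N : ℝ) (hL : 0 < L) (hc : 0 < c) (hN : 0 < N)
    (j₀ n : ℕ)
    (Ω : Type) [MeasurableSpace Ω] (P : Measure Ω) [IsProbabilityMeasure P]
    (η : ℕ → ℕ → Ω → ℝ) (hmeas : ∀ j k, Measurable (η j k))
    (hsparse : ∀ j ≤ j₀,
      {k : ℕ | ¬ (η j k =ᵐ[P] fun _ => 0)}.Finite ∧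
      (({k : ℕ | ¬ (η j k =ᵐ[P] fun _ => 0)}.ncard : ℝ) ≤ N * 2 ^ (D * j)))
    (hmom : ∀ j k, j ≤ j₀ →
      ∫⁻ ω, (‖η j k ω‖₊ : ℝ≥0∞) ^ (holderConj pd).toReal ∂P
        ≤ ENNReal.ofReal (c * (n : ℝ) ^ (-(holderConj pd).toReal / 2))) :
    ∫⁻ ω, ENNReal.ofReal (sSup { t : ℝ | ∃ γ : ℕ → ℕ → ℝ,
        lpw qd (fun j => if j ≤ j₀ then
            ENNReal.ofReal ((2 : ℝ) ^ ((j : ℝ) * (σd + (D : ℝ) / 2 - (D : ℝ) * (pd⁻¹).toReal)))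
              * lpw pd (fun k => (‖γ j k‖₊ : ℝ≥0∞))
          else 0) ≤ ENNReal.ofReal L ∧
        t = ∑ j ∈ Finset.range (j₀ + 1), ∑' k, γ j k * η j k ω }) ∂P
      ≤ ENNReal.ofReal
          (L * (c * N) ^ (1 / (holderConj pd).toReal) * (n : ℝ) ^ (-(1 : ℝ) / 2)
            * ∑ j ∈ Finset.range (j₀ + 1), (2 : ℝ) ^ ((j : ℝ) * ((D : ℝ) / 2 - σd))) := by
  set t := (holderConj pd).toReal
  set s := σd + (D : ℝ) / 2 - (D : ℝ) * (pd⁻¹).toReal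
  have ht : 1 ≤ t := one_le_toReal_holderConj hpd hpd'
  have hlevel : ∀ j ≤ j₀, ∫⁻ ω, lpw (holderConj pd) (fun k => ‖η j k ω‖ₑ) ∂P
      ≤ ENNReal.ofReal ((N * 2 ^ (D * j) * (c * (n : ℝ) ^ (-t / 2))) ^ (1 / t)) := by
    intro j hj
    obtain ⟨hfin, hcard⟩ := hsparse j hj
    refine (lintegral_lpw_le_of_finite_nonzero ht (hmeas j) hfin (hmom j · hj)).trans ?_
    rw [← ofReal_rpow_of_nonneg (by positivity) (by positivity),
      ofReal_mul (p := N * 2 ^ (D * j)) (by positivity)]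
    gcongr
    exact (ofReal_natCast _).symm.trans_le (ofReal_le_ofReal hcard)
  have hw j : 0 < (2 : ℝ) ^ ((j : ℝ) * s) := by positivity
  calc _ ≤ ∫⁻ ω, ∑ j ∈ Finset.range (j₀ + 1), ENNReal.ofReal L / ENNReal.ofReal (2 ^ ((j : ℝ) * s))
          * lpw (holderConj pd) (fun k => ‖η j k ω‖ₑ) ∂P :=
        lintegral_mono fun ω => ofReal_sSup_sum_tsum_mul_le hpd (one_pos.trans_le hqd).ne'
          (w := fun j => ENNReal.ofReal (2 ^ ((j : ℝ) * s)))
          (fun j _ => by simpa using hw j) (fun j _ => ofReal_ne_top) _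
    _ = ∑ j ∈ Finset.range (j₀ + 1), ENNReal.ofReal (L / 2 ^ ((j : ℝ) * s))
          * ∫⁻ ω, lpw (holderConj pd) (fun k => ‖η j k ω‖ₑ) ∂P := by
        rw [lintegral_finsetSum' _ fun j _ =>
          ((Measurable.lpw fun k => (hmeas j k).enorm).const_mul _).aemeasurable]
        refine Finset.sum_congr rfl fun j _ => ?_
        rw [← ofReal_div_of_pos (hw j), lintegral_const_mul' _ _ ofReal_ne_top]
    _ ≤ ∑ j ∈ Finset.range (j₀ + 1), ENNReal.ofReal (L / 2 ^ ((j : ℝ) * s))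
          * ENNReal.ofReal ((N * 2 ^ (D * j) * (c * (n : ℝ) ^ (-t / 2))) ^ (1 / t)) := by
        gcongr with j hj
        exact hlevel j (Nat.lt_succ_iff.1 (Finset.mem_range.1 hj))
    _ = _ := by
        rw [Finset.mul_sum, ofReal_sum_of_nonneg fun j _ => by positivity]
        refine Finset.sum_congr rfl fun j _ => ?_
        rw [← ofReal_mul (by positivity), div_two_rpow_mul_level_bound_eq hc.le hN.le
          (inv_toReal_holderConj hpd) (by positivity)]

/-- Variance bound for the linear wavelet estimator in coefficient space:
if per level `j ≤ j₀` at most `N·2^{Dj}` of the error variables `η_{j,k}` are nonzero and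
`E[|η_{j,k}|^{p_d'}] ≤ c·n^{−p_d'/2}`, then
`E[ sup_γ Σ_{j=0}^{j₀} Σ_k γ_{j,k} η_{j,k} ]
  ≤ L·(cN)^{1/p_d'}·n^{−1/2}·Σ_{j=0}^{j₀} 2^{j(D/2−σ_d)}`,
the supremum being over `γ` in the coefficient ball of `B^{σ_d}_{p_d,q_d}(L)`. -/
theorem linear_estimator_variance_bound
    (D : ℕ) (hD : 0 < D) (σd : ℝ) (hσd : 0 ≤ σd)
    (pd qd : ℝ≥0∞) (hpd : 1 ≤ pd) (hqd : 1 ≤ qd)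
    (hpd' : holderConj pd ≠ ∞)
    (L c N : ℝ) (hL : 0 < L) (hc : 0 < c) (hN : 0 < N)
    (j₀ n : ℕ) (hn : 0 < n)
    (Ω : Type) [MeasurableSpace Ω] (P : Measure Ω) [IsProbabilityMeasure P]
    (η : ℕ → ℕ → Ω → ℝ) (hmeas : ∀ j k, Measurable (η j k))
    (hsparse : ∀ j ≤ j₀,
      {k : ℕ | ¬ (η j k =ᵐ[P] fun _ => 0)}.Finite ∧
      (({k : ℕ | ¬ (η j k =ᵐ[P] fun _ => 0)}.ncard : ℝ) ≤ N * 2 ^ (D * j)))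
    (hmom : ∀ j k, j ≤ j₀ →
      ∫⁻ ω, (‖η j k ω‖₊ : ℝ≥0∞) ^ (holderConj pd).toReal ∂P
        ≤ ENNReal.ofReal (c * (n : ℝ) ^ (-(holderConj pd).toReal / 2))) :
    ∫⁻ ω, ENNReal.ofReal (sSup { t : ℝ | ∃ γ : ℕ → ℕ → ℝ,
        lpw qd (fun j => if j ≤ j₀ then
            ENNReal.ofReal ((2 : ℝ) ^ ((j : ℝ) * (σd + (D : ℝ) / 2 - (D : ℝ) * (pd⁻¹).toReal)))
              * lpw pd (fun k => (‖γ j k‖₊ : ℝ≥0∞))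
          else 0) ≤ ENNReal.ofReal L ∧
        t = ∑ j ∈ Finset.range (j₀ + 1), ∑' k, γ j k * η j k ω }) ∂P
      ≤ ENNReal.ofReal
          (L * (c * N) ^ (1 / (holderConj pd).toReal) * (n : ℝ) ^ (-(1 : ℝ) / 2)
            * ∑ j ∈ Finset.range (j₀ + 1), (2 : ℝ) ^ ((j : ℝ) * ((D : ℝ) / 2 - σd))) :=
  linear_estimator_variance_bound_general D σd pd qd hpd hqd hpd' L c N hL hc hN j₀ n Ω P η hmeas
    hsparse hmom
end

section
/- Let F be a family of measurable functions f : ℝ^D → ℝ with ‖f‖_∞ ≤ M for all f ∈ F, and let F' ⊆ F satisfy sup_{f ∈ F} inf_{g ∈ F'} ‖f − g‖_∞ ≤ ε. Let p be a probability density on ℝ^D supported in [−T,T]^D, let G' be a family of probability measures with densities supported in [−T,T]^D such that some q ∈ G' has ‖p − q‖_{L∞} ≤ ε, let p̃ be any probability measure, and let p̂ ∈ G' satisfy d_{F'}(p̂, p̃) = inf_{Q ∈ G'} d_{F'}(Q, p̃). Then d_F(p̂, μ_p) ≤ 2(M(2T)^D + 1)·ε + 2·d_F(μ_p, p̃), where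 μ_p is the measure with density p. -/
/-!
Three estimates combine. Replacing the discriminator class `F` by its `ε`-net `F'` costs `2ε`
in the metric. Since `p̂` minimises `d_{F'}(·, p̃)` over `G'`, two triangle inequalities give the
oracle inequality `d_{F'}(p̂, μ_p) ≤ d_{F'}(μ_q, μ_p) + 2 d_{F'}(μ_p, p̃)` for every `μ_q ∈ G'`.
Finally, for densities vanishing off the cube `[-T, T]^D` and `ε`-close in `L^∞`,
`∫ f dμ_p - ∫ f dμ_q = ∫_{[-T,T]^D} (p - q) f` is at most `M ε (2T)^D` in absolute value.
-/

open MeasureTheory ENNReal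

/-- The `F`-integral probability metric `d_F(P,Q) = sup_{f∈F} |∫ f dP − ∫ f dQ|`
(valued in `ℝ≥0∞`). -/
noncomputable def ipm {X : Type*} [MeasurableSpace X]
    (F : Set (X → ℝ)) (P Q : Measure X) : ℝ≥0∞ :=
  ⨆ f ∈ F, ENNReal.ofReal |(∫ x, f x ∂P) - ∫ x, f x ∂Q|

/-- The sup-norm distance `‖f − g‖_∞` between two real-valued functions (in `ℝ≥0∞`). -/
noncomputable def supDist {X : Type*} (f g : X → ℝ) : ℝ≥0∞ :=
  ⨆ x, (‖f x - g x‖₊ : ℝ≥0∞)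

open Filter Topology Set

lemma abs_sub_lt_of_supDist_lt {Y : Type*} {f g : Y → ℝ} {η : ℝ}
    (h : supDist f g < ENNReal.ofReal η) (y : Y) : |f y - g y| < η := by
  have hy : ENNReal.ofReal |f y - g y| < ENNReal.ofReal η := by
    rw [← Real.norm_eq_abs, ofReal_norm]
    exact (le_iSup (fun y => (‖f y - g y‖₊ : ℝ≥0∞)) y).trans_lt h
  exact (ENNReal.ofReal_lt_ofReal_iff'.1 hy).1

section Metric

variable {X : Type*} [MeasurableSpace X] {F F' : Set (X → ℝ)} {P Q : Measure X}

lemma ofReal_abs_integral_sub_le_ipm {f : X → ℝ} (hf : f ∈ F) (P Q : Measure X) :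
    ENNReal.ofReal |(∫ x, f x ∂P) - ∫ x, f x ∂Q| ≤ ipm F P Q :=
  le_iSup₂_of_le f hf le_rfl

lemma ipm_le_ofReal {c : ℝ} (h : ∀ f ∈ F, |(∫ x, f x ∂P) - ∫ x, f x ∂Q| ≤ c) :
    ipm F P Q ≤ ENNReal.ofReal c :=
  iSup₂_le fun f hf => ENNReal.ofReal_le_ofReal (h f hf)

lemma ipm_mono (h : F' ⊆ F) (P Q : Measure X) : ipm F' P Q ≤ ipm F P Q :=
  biSup_mono fun _ hf => h hf

lemma ipm_comm (F : Set (X → ℝ)) (P Q : Measure X) : ipm F P Q = ipm F Q P := by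
  simp only [ipm, abs_sub_comm]

lemma ipm_triangle (F : Set (X → ℝ)) (P Q R : Measure X) :
    ipm F P R ≤ ipm F P Q + ipm F Q R := by
  refine iSup₂_le fun f hf => ?_
  calc ENNReal.ofReal |(∫ x, f x ∂P) - ∫ x, f x ∂ R|
      ≤ ENNReal.ofReal (|(∫ x, f x ∂P) - ∫ x, f x ∂Q| + |(∫ x, f x ∂Q) - ∫ x, f x ∂ R|) :=
        ENNReal.ofReal_le_ofReal (abs_sub_le _ _ _)
    _ ≤ ENNReal.ofReal |(∫ x, f x ∂P) - ∫ x, f x ∂Q|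
        + ENNReal.ofReal |(∫ x, f x ∂Q) - ∫ x, f x ∂ R| := ENNReal.ofReal_add_le
    _ ≤ ipm F P Q + ipm F Q R := by
        gcongr <;> exact ofReal_abs_integral_sub_le_ipm hf _ _

lemma ipm_le_of_eq_iInf {G : Set (Measure X)} {P₀ μ ν : Measure X}
    (hP₀ : ipm F P₀ ν = ⨅ R ∈ G, ipm F R ν) (hQ : Q ∈ G) :
    ipm F P₀ μ ≤ ipm F Q μ + 2 * ipm F μ ν := by
  have hmin : ipm F P₀ ν ≤ ipm F Q ν := hP₀ ▸ iInf₂_le Q hQ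
  calc ipm F P₀ μ ≤ ipm F P₀ ν + ipm F ν μ := ipm_triangle _ _ _ _
    _ ≤ (ipm F Q μ + ipm F μ ν) + ipm F μ ν := by
        rw [ipm_comm F ν μ]; gcongr; exact hmin.trans (ipm_triangle _ _ _ _)
    _ = ipm F Q μ + 2 * ipm F μ ν := by rw [two_mul, add_assoc]

lemma abs_integral_sub_le_of_abs_sub_le [IsProbabilityMeasure P] {f g : X → ℝ} {η : ℝ}
    (hf : Integrable f P) (hg : Integrable g P) (hfg : ∀ x, |f x - g x| ≤ η) :
    |(∫ x, f x ∂P) - ∫ x, g x ∂P| ≤ η := by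
  rw [← integral_sub hf hg, ← Real.norm_eq_abs]
  simpa using norm_integral_le_of_norm_le_const (μ := P) (f := fun x => f x - g x)
    (Eventually.of_forall fun x => (Real.norm_eq_abs _).trans_le (hfg x))

lemma abs_integral_sub_integral_le_of_abs_sub_le [IsProbabilityMeasure P]
    [IsProbabilityMeasure Q] {f g : X → ℝ} {M η : ℝ}
    (hf : Measurable f) (hfM : ∀ x, |f x| ≤ M) (hg : Measurable g) (hgM : ∀ x, |g x| ≤ M)
    (hfg : ∀ x, |f x - g x| ≤ η) :
    |(∫ x, f x ∂P) - ∫ x, f x ∂Q| ≤ |(∫ x, g x ∂P) - ∫ x, g x ∂Q| + 2 * η := by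
  have hint (μ : Measure X) [IsProbabilityMeasure μ] {h : X → ℝ} (hh : Measurable h)
      (hhM : ∀ x, |h x| ≤ M) : Integrable h μ :=
    .of_bound hh.aestronglyMeasurable M (Eventually.of_forall hhM)
  have hP := abs_le.1 <| abs_integral_sub_le_of_abs_sub_le (hint P hf hfM) (hint P hg hgM) hfg
  have hQ := abs_le.1 <| abs_integral_sub_le_of_abs_sub_le (hint Q hf hfM) (hint Q hg hgM) hfg
  have hΔg := abs_le.1 (le_refl |(∫ x, g x ∂P) - ∫ x, g x ∂Q|)
  exact abs_le.2 ⟨by linarith, by linarith⟩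

lemma ipm_le_ipm_add_of_supDist_le [IsProbabilityMeasure P] [IsProbabilityMeasure Q]
    {M ε : ℝ} (hε : 0 ≤ ε) (hF : ∀ f ∈ F, Measurable f ∧ ∀ x, |f x| ≤ M) (hF'F : F' ⊆ F)
    (happrox : (⨆ f ∈ F, ⨅ g ∈ F', supDist f g) ≤ ENNReal.ofReal ε) :
    ipm F P Q ≤ ipm F' P Q + ENNReal.ofReal (2 * ε) := by
  have hη : ∀ η > ε, ipm F P Q ≤ ipm F' P Q + ENNReal.ofReal (2 * η) := by
    intro η hη
    refine iSup₂_le fun f hf => ?_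
    obtain ⟨g, hgF', hfg⟩ : ∃ g ∈ F', supDist f g < ENNReal.ofReal η :=
      lt_biInf_iff.1 <| ((le_iSup₂_of_le f hf le_rfl).trans happrox).trans_lt <|
        ENNReal.ofReal_lt_ofReal_iff'.2 ⟨hη, hε.trans_lt hη⟩
    obtain ⟨hfm, hfM⟩ := hF f hf
    obtain ⟨hgm, hgM⟩ := hF g (hF'F hgF')
    calc ENNReal.ofReal |(∫ x, f x ∂P) - ∫ x, f x ∂Q|
        ≤ ENNReal.ofReal (|(∫ x, g x ∂P) - ∫ x, g x ∂Q| + 2 * η) :=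
          ENNReal.ofReal_le_ofReal <| abs_integral_sub_integral_le_of_abs_sub_le hfm hfM hgm hgM
            fun x => (abs_sub_lt_of_supDist_lt hfg x).le
      _ ≤ ENNReal.ofReal |(∫ x, g x ∂P) - ∫ x, g x ∂Q| + ENNReal.ofReal (2 * η) :=
          ENNReal.ofReal_add_le
      _ ≤ ipm F' P Q + ENNReal.ofReal (2 * η) := by
          gcongr; exact ofReal_abs_integral_sub_le_ipm hgF' _ _
  have hlim : Tendsto (fun η => ipm F' P Q + ENNReal.ofReal (2 * η)) (𝓝[>] ε)
      (𝓝 (ipm F' P Q + ENNReal.ofReal (2 * ε))) :=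
    tendsto_const_nhds.add <|
      ((ENNReal.continuous_ofReal.comp (continuous_const_mul 2)).tendsto ε).mono_left
        nhdsWithin_le_nhds
  exact ge_of_tendsto hlim (eventually_nhdsWithin_of_forall hη)

end Metric

lemma ae_abs_le_of_eLpNorm_top_le {X : Type*} [MeasurableSpace X] {μ : Measure X} {h : X → ℝ}
    {c : ℝ} (hc : 0 ≤ c) (hh : eLpNorm h ⊤ μ ≤ ENNReal.ofReal c) : ∀ᵐ x ∂μ, |h x| ≤ c := by
  filter_upwards [ae_le_eLpNormEssSup (f := h) (μ := μ)] with x hx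
  rw [← eLpNorm_exponent_top, ← ofReal_norm, Real.norm_eq_abs] at hx
  exact (ENNReal.ofReal_le_ofReal_iff hc).1 (hx.trans hh)

section Density

variable {X : Type*} [MeasurableSpace X] {μ : Measure X} {p q : X → ℝ}

lemma integral_withDensity_ofReal (hp : Measurable p) (hp0 : ∀ x, 0 ≤ p x) (f : X → ℝ) :
    ∫ x, f x ∂μ.withDensity (fun x => ENNReal.ofReal (p x)) = ∫ x, p x * f x ∂μ := by
  rw [integral_withDensity_eq_integral_toReal_smul hp.ennreal_ofReal
    (Eventually.of_forall fun _ => ofReal_lt_top)]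
  simp only [ENNReal.toReal_ofReal (hp0 _), smul_eq_mul]

lemma integrable_of_isFiniteMeasure_withDensity_ofReal (hp : Measurable p) (hp0 : ∀ x, 0 ≤ p x)
    [IsFiniteMeasure (μ.withDensity fun x => ENNReal.ofReal (p x))] : Integrable p μ := by
  have hfin : ∫⁻ x, ENNReal.ofReal (p x) ∂μ ≠ ∞ := by
    rw [← setLIntegral_univ, ← withDensity_apply _ MeasurableSet.univ]
    exact measure_ne_top _ _
  simpa only [ENNReal.toReal_ofReal (hp0 _)] using
    integrable_toReal_of_lintegral_ne_top hp.ennreal_ofReal.aemeasurable hfin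

lemma abs_integral_withDensity_sub_le {S : Set X} (hS : μ S ≠ ∞) {M ε : ℝ}
    (hp : Measurable p) (hp0 : ∀ x, 0 ≤ p x) (hpS : Function.support p ⊆ S)
    (hq : Measurable q) (hq0 : ∀ x, 0 ≤ q x) (hqS : Function.support q ⊆ S)
    [IsFiniteMeasure (μ.withDensity fun x => ENNReal.ofReal (p x))]
    [IsFiniteMeasure (μ.withDensity fun x => ENNReal.ofReal (q x))]
    (hpq : ∀ᵐ x ∂μ, |p x - q x| ≤ ε) {f : X → ℝ} (hf : Measurable f) (hfM : ∀ x, |f x| ≤ M) :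
    |(∫ x, f x ∂μ.withDensity fun x => ENNReal.ofReal (p x))
      - ∫ x, f x ∂μ.withDensity fun x => ENNReal.ofReal (q x)| ≤ M * μ.real S * ε := by
  have hfM' : ∀ᵐ x ∂μ, ‖f x‖ ≤ M := Eventually.of_forall hfM
  have hpf := (integrable_of_isFiniteMeasure_withDensity_ofReal hp hp0).mul_bdd
    hf.aestronglyMeasurable hfM'
  have hqf := (integrable_of_isFiniteMeasure_withDensity_ofReal hq hq0).mul_bdd
    hf.aestronglyMeasurable hfM'
  have hvanish : ∀ x ∉ S, (p x - q x) * f x = 0 := fun x hx => by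
    rw [Function.notMem_support.1 (hx ∘ @hpS x), Function.notMem_support.1 (hx ∘ @hqS x)]
    ring
  rw [integral_withDensity_ofReal hp hp0, integral_withDensity_ofReal hq hq0,
    ← integral_sub hpf hqf, ← Real.norm_eq_abs]
  simp_rw [← sub_mul]
  rw [← setIntegral_eq_integral_of_forall_compl_eq_zero hvanish]
  refine (norm_setIntegral_le_of_norm_le_const_ae' (C := ε * M) hS.lt_top ?_).trans_eq (by ring)
  filter_upwards [hpq] with x hx _
  rw [norm_mul, Real.norm_eq_abs, Real.norm_eq_abs]
  exact mul_le_mul hx (hfM x) (abs_nonneg _) ((abs_nonneg _).trans hx)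

lemma ipm_withDensity_le {F : Set (X → ℝ)} {S : Set X} (hS : μ S ≠ ∞) {M ε : ℝ}
    (hF : ∀ f ∈ F, Measurable f ∧ ∀ x, |f x| ≤ M)
    (hp : Measurable p) (hp0 : ∀ x, 0 ≤ p x) (hpS : Function.support p ⊆ S)
    (hq : Measurable q) (hq0 : ∀ x, 0 ≤ q x) (hqS : Function.support q ⊆ S)
    [IsFiniteMeasure (μ.withDensity fun x => ENNReal.ofReal (p x))]
    [IsFiniteMeasure (μ.withDensity fun x => ENNReal.ofReal (q x))]
    (hpq : ∀ᵐ x ∂μ, |p x - q x| ≤ ε) :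
    ipm F (μ.withDensity fun x => ENNReal.ofReal (p x))
      (μ.withDensity fun x => ENNReal.ofReal (q x)) ≤ ENNReal.ofReal (M * μ.real S * ε) :=
  ipm_le_ofReal fun f hf =>
    abs_integral_withDensity_sub_le hS hp hp0 hpS hq hq0 hqS hpq (hF f hf).1 (hF f hf).2

end Density

lemma volume_real_Icc_cube {T : ℝ} (hT : 0 ≤ T) (D : ℕ) :
    volume.real (Icc (fun _ : Fin D => -T) (fun _ => T)) = (2 * T) ^ D := by
  rw [measureReal_def, Real.volume_Icc_pi_toReal fun _ => neg_le_self hT]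
  simp only [sub_neg_eq_add, Finset.prod_const, Finset.card_univ, Fintype.card_fin, ← two_mul]

theorem gan_risk_bound_general
    (D : ℕ) (M T ε : ℝ) (hM : 0 ≤ M) (hT : 0 < T) (hε : 0 ≤ ε)
    (F F' : Set ((Fin D → ℝ) → ℝ))
    (hF : ∀ f ∈ F, Measurable f ∧ ∀ x, |f x| ≤ M)
    (hF'F : F' ⊆ F)
    (happrox : (⨆ f ∈ F, ⨅ g ∈ F', supDist f g) ≤ ENNReal.ofReal ε)
    (p : (Fin D → ℝ) → ℝ)
    (hpmeas : Measurable p) (hpnonneg : ∀ x, 0 ≤ p x)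
    (hpsupp : Function.support p ⊆ Set.Icc (fun _ => -T) (fun _ => T))
    (hP : IsProbabilityMeasure (volume.withDensity fun x => ENNReal.ofReal (p x)))
    (G' : Set (Measure (Fin D → ℝ)))
    (hG' : ∀ μ ∈ G', IsProbabilityMeasure μ ∧ ∃ qf : (Fin D → ℝ) → ℝ,
      Measurable qf ∧ (∀ x, 0 ≤ qf x) ∧
      Function.support qf ⊆ Set.Icc (fun _ => -T) (fun _ => T) ∧
      μ = volume.withDensity fun x => ENNReal.ofReal (qf x))
    (hclose : ∃ qf : (Fin D → ℝ) → ℝ,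
      Measurable qf ∧ (∀ x, 0 ≤ qf x) ∧
      Function.support qf ⊆ Set.Icc (fun _ => -T) (fun _ => T) ∧
      (volume.withDensity fun x => ENNReal.ofReal (qf x)) ∈ G' ∧
      eLpNorm (fun x => p x - qf x) ⊤ volume ≤ ENNReal.ofReal ε)
    (ptilde : Measure (Fin D → ℝ))
    (phat : Measure (Fin D → ℝ)) (hphat : phat ∈ G')
    (hopt : ipm F' phat ptilde = ⨅ Q ∈ G', ipm F' Q ptilde) :
    ipm F phat (volume.withDensity fun x => ENNReal.ofReal (p x))
      ≤ ENNReal.ofReal (2 * (M * (2 * T) ^ D + 1) * ε)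
        + 2 * ipm F (volume.withDensity fun x => ENNReal.ofReal (p x)) ptilde := by
  obtain ⟨q, hqm, hq0, hqs, hqG', hpq⟩ := hclose
  have : IsProbabilityMeasure phat := (hG' phat hphat).1
  have : IsProbabilityMeasure (volume.withDensity fun x => ENNReal.ofReal (q x)) :=
    (hG' _ hqG').1
  set μp := volume.withDensity fun x => ENNReal.ofReal (p x)
  set μq := volume.withDensity fun x => ENNReal.ofReal (q x)
  have hdensity : ipm F' μq μp ≤ ENNReal.ofReal (M * (2 * T) ^ D * ε) := by
    rw [ipm_comm, ← volume_real_Icc_cube hT.le]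
    exact ipm_withDensity_le isCompact_Icc.measure_lt_top.ne (fun f hf => hF f (hF'F hf))
      hpmeas hpnonneg hpsupp hqm hq0 hqs (ae_abs_le_of_eLpNorm_top_le hε hpq)
  have hconst : ENNReal.ofReal (M * (2 * T) ^ D * ε) + ENNReal.ofReal (2 * ε)
      ≤ ENNReal.ofReal (2 * (M * (2 * T) ^ D + 1) * ε) := by
    rw [← ENNReal.ofReal_add (by positivity) (by positivity)]
    exact ENNReal.ofReal_le_ofReal (by nlinarith [show 0 ≤ M * (2 * T) ^ D * ε by positivity])
  calc ipm F phat μp ≤ ipm F' phat μp + ENNReal.ofReal (2 * ε) :=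
        ipm_le_ipm_add_of_supDist_le hε hF hF'F happrox
    _ ≤ ipm F' μq μp + 2 * ipm F' μp ptilde + ENNReal.ofReal (2 * ε) := by
        gcongr; exact ipm_le_of_eq_iInf hopt hqG'
    _ ≤ ENNReal.ofReal (M * (2 * T) ^ D * ε) + 2 * ipm F μp ptilde + ENNReal.ofReal (2 * ε) := by
        gcongr; exact ipm_mono hF'F _ _
    _ ≤ ENNReal.ofReal (2 * (M * (2 * T) ^ D + 1) * ε) + 2 * ipm F μp ptilde := by
        rw [add_right_comm]; gcongr

/-- Risk bound for the GAN estimate: if the discriminator class `F'` ⊆ `F`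
approximates the bounded class `F` to sup-norm accuracy `ε`, some measure in the generator
class `G'` has density within `ε` of `p` in `L^∞`, and `p̂ ∈ G'` minimizes `d_{F'}(·, p̃)`,
then `d_F(p̂, μ_p) ≤ 2(M(2T)^D + 1)ε + 2 d_F(μ_p, p̃)`. -/
theorem gan_risk_bound
    (D : ℕ) (M T ε : ℝ) (hM : 0 ≤ M) (hT : 0 < T) (hε : 0 ≤ ε)
    (F F' : Set ((Fin D → ℝ) → ℝ))
    (hF : ∀ f ∈ F, Measurable f ∧ ∀ x, |f x| ≤ M)
    (hF'F : F' ⊆ F)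
    (happrox : (⨆ f ∈ F, ⨅ g ∈ F', supDist f g) ≤ ENNReal.ofReal ε)
    (p : (Fin D → ℝ) → ℝ)
    (hpmeas : Measurable p) (hpnonneg : ∀ x, 0 ≤ p x)
    (hpsupp : Function.support p ⊆ Set.Icc (fun _ => -T) (fun _ => T))
    (hP : IsProbabilityMeasure (volume.withDensity fun x => ENNReal.ofReal (p x)))
    (G' : Set (Measure (Fin D → ℝ)))
    (hG' : ∀ μ ∈ G', IsProbabilityMeasure μ ∧ ∃ qf : (Fin D → ℝ) → ℝ,
      Measurable qf ∧ (∀ x, 0 ≤ qf x) ∧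
      Function.support qf ⊆ Set.Icc (fun _ => -T) (fun _ => T) ∧
      μ = volume.withDensity fun x => ENNReal.ofReal (qf x))
    (hclose : ∃ qf : (Fin D → ℝ) → ℝ,
      Measurable qf ∧ (∀ x, 0 ≤ qf x) ∧
      Function.support qf ⊆ Set.Icc (fun _ => -T) (fun _ => T) ∧
      (volume.withDensity fun x => ENNReal.ofReal (qf x)) ∈ G' ∧
      eLpNorm (fun x => p x - qf x) ⊤ volume ≤ ENNReal.ofReal ε)
    (ptilde : Measure (Fin D → ℝ)) (hptilde : IsProbabilityMeasure ptilde)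
    (phat : Measure (Fin D → ℝ)) (hphat : phat ∈ G')
    (hopt : ipm F' phat ptilde = ⨅ Q ∈ G', ipm F' Q ptilde) :
    ipm F phat (volume.withDensity fun x => ENNReal.ofReal (p x))
      ≤ ENNReal.ofReal (2 * (M * (2 * T) ^ D + 1) * ε)
        + 2 * ipm F (volume.withDensity fun x => ENNReal.ofReal (p x)) ptilde :=
  gan_risk_bound_general D M T ε hM hT hε F F' hF hF'F happrox p hpmeas hpnonneg hpsupp hP G' hG'
    hclose ptilde phat hphat hopt
end
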